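/- Let C be a Krull–Schmidt ℂ-category with finite biproducts, and let F : C → C be a strongly non-periodic autofunctor: F is an equivalence with a chosen inverse F^{−1}, and for every object A and every k ∈ ℤ, F^k(A) ≅ A implies that A is a zero object or k = 0. Let k ≤ l be integers and b_k, …, b_l nonnegative integers, not all zero, and for an object A define G(A) = ⊕_{i=k}^{l} F^i(A)^{⊕ b_i} (the biproduct of b_i copies of F^i(A) over all i). If A and B are objects of C with G(A) ≅ G(B), then A ≅ B. -/

import Mathlib

/-!
Statement 11: Let `C` be a Krull–Schmidt `ℂ`-category with finite biproducts and let
`F : C → C` be a strongly non-periodic autofunctor (an equivalence, with chosen inverse,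
such that `F^k(A) ≅ A` forces `A ≅ 0` or `k = 0`).  For integers `k ≤ l` and nonnegative
integers `b_k, …, b_l`, not all zero, set `G(A) = ⊕_{i=k}^{l} F^i(A)^{⊕ b_i}`.
If `G(A) ≅ G(B)`, then `A ≅ B`.
-/

open CategoryTheory CategoryTheory.Limits

universe v u

variable {C : Type u} [Category.{v} C]

/-- The `n`-fold composition of an endofunctor. -/
def natPow (F : C ⥤ C) : ℕ → (C ⥤ C)
  | 0 => 𝟭 C
  | n + 1 => natPow F n ⋙ F

/-- The `i`-th power (for `i : ℤ`) of a self-equivalence: the `i`-fold composition of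
`F = e.functor` for `i ≥ 0`, and of the inverse `F⁻¹ = e.inverse` for `i < 0`. -/
def zpowFunctor (e : C ≌ C) : ℤ → (C ⥤ C)
  | Int.ofNat n => natPow e.functor n
  | Int.negSucc n => natPow e.inverse (n + 1)

section

variable (C)
variable [Preadditive C] [CategoryTheory.Linear ℂ C] [HasFiniteBiproducts C]

attribute [local instance] hasBinaryBiproducts_of_finite_biproducts

/-- A `ℂ`-category with finite biproducts is Krull–Schmidt if every object is isomorphic
to a finite biproduct of indecomposable objects, and such a decomposition is unique up to
permutation and isomorphism of the summands. -/
def IsKrullSchmidt : Prop :=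
  (∀ X : C, ∃ (n : ℕ) (f : Fin n → C),
    (∀ i, Indecomposable (f i)) ∧ Nonempty (X ≅ ⨁ f)) ∧
  (∀ (n l : ℕ) (f : Fin n → C) (g : Fin l → C),
    (∀ i, Indecomposable (f i)) → (∀ j, Indecomposable (g j)) →
    Nonempty ((⨁ f) ≅ ⨁ g) →
    ∃ σ : Fin n ≃ Fin l, ∀ i, Nonempty (f i ≅ g (σ i)))

variable {C}

/-- `G(A) = ⊕_{i=k}^{l} F^i(A)^{⊕ b_i}`: the biproduct, over `i ∈ [k, l]` and over `b_i`
copies, of `F^i(A)`. -/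
noncomputable def Gobj (e : C ≌ C) (k l : ℤ) (b : ℤ → ℕ) (A : C) : C :=
  ⨁ (fun p : Σ i : (Finset.Icc k l : Finset ℤ), Fin (b (i : ℤ)) =>
      (zpowFunctor e (p.1 : ℤ)).obj A)

end

/-!
Decompose `A ≅ ⨁ⱼ Aⱼ` and `B ≅ ⨁ⱼ Bⱼ` into indecomposables. Then `G(A)` is the biproduct of the
indecomposables `F^i(Aⱼ)`, each taken `b_i` times, so by Krull–Schmidt uniqueness `G(A)` and `G(B)`
have, for every `X` and `t`, the same number of summands isomorphic to `F^t(X)`. As a function of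
`t` this number is the convolution of `(b_i)` with `s ↦ #{j | Aⱼ ≅ F^s(X)}`, a finitely supported
function since `F` is strongly non-periodic. Convolution with a nonzero finitely supported sequence
is injective on finitely supported sequences (compare top coefficients), so `A` and `B` have the
same multiplicity at every `X`, hence `A ≅ B`.
-/

def StronglyNonperiodic (e : C ≌ C) : Prop :=
  ∀ (A : C) (k : ℤ), Nonempty ((zpowFunctor e k).obj A ≅ A) → IsZero A ∨ k = 0

instance natPow.isEquivalence (F : C ⥤ C) [F.IsEquivalence] (n : ℕ) :
    (natPow F n).IsEquivalence := by
  induction n with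
  | zero => exact inferInstanceAs (𝟭 C).IsEquivalence
  | succ n ih => exact inferInstanceAs (natPow F n ⋙ F).IsEquivalence

namespace zpowFunctor

variable (e : C ≌ C)

def addOneIso : ∀ m : ℤ, zpowFunctor e (m + 1) ≅ zpowFunctor e m ⋙ e.functor
  | Int.ofNat _ => Iso.refl _
  | Int.negSucc 0 => e.counitIso.symm
  | Int.negSucc (n + 1) => (Functor.rightUnitor _).symm ≪≫
      Functor.isoWhiskerLeft (natPow e.inverse (n + 1)) e.counitIso.symm ≪≫
      (Functor.associator _ _ _).symm

def subOneIso (m : ℤ) : zpowFunctor e (m - 1) ≅ zpowFunctor e m ⋙ e.inverse :=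
  (Functor.rightUnitor _).symm ≪≫ Functor.isoWhiskerLeft _ e.unitIso ≪≫
    (Functor.associator _ _ _).symm ≪≫ Functor.isoWhiskerRight (addOneIso e (m - 1)).symm _ ≪≫
    eqToIso (by rw [sub_add_cancel])

theorem nonempty_add_iso (a b : ℤ) :
    Nonempty (zpowFunctor e (a + b) ≅ zpowFunctor e a ⋙ zpowFunctor e b) := by
  induction b using Int.induction_on with
  | zero => exact ⟨eqToIso (by rw [add_zero]) ≪≫ (Functor.rightUnitor _).symm⟩
  | succ b ih =>
    obtain ⟨φ⟩ := ih
    exact ⟨eqToIso (by rw [add_assoc]) ≪≫ addOneIso e (a + b) ≪≫ Functor.isoWhiskerRight φ _ ≪≫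
      Functor.associator _ _ _ ≪≫ Functor.isoWhiskerLeft _ (addOneIso e b).symm⟩
  | pred b ih =>
    obtain ⟨φ⟩ := ih
    exact ⟨eqToIso (by rw [add_sub_assoc']) ≪≫ subOneIso e (a + -b) ≪≫
      Functor.isoWhiskerRight φ _ ≪≫ Functor.associator _ _ _ ≪≫
      Functor.isoWhiskerLeft _ (subOneIso e (-b)).symm⟩

instance isEquivalence (i : ℤ) : (zpowFunctor e i).IsEquivalence := by
  cases i with
  | ofNat n => exact natPow.isEquivalence e.functor n
  | negSucc n => exact natPow.isEquivalence e.inverse (n + 1)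

instance additive [Preadditive C] [HasFiniteBiproducts C] (i : ℤ) :
    (zpowFunctor e i).Additive :=
  Functor.additive_of_preserves_binary_products _

theorem nonempty_obj_iso_iff (i t : ℤ) (Z X : C) :
    Nonempty ((zpowFunctor e i).obj Z ≅ (zpowFunctor e t).obj X) ↔
      Nonempty (Z ≅ (zpowFunctor e (t - i)).obj X) := by
  obtain ⟨φ⟩ := nonempty_add_iso e (t - i) i
  rw [sub_add_cancel] at φ
  exact ⟨fun ⟨α⟩ => ⟨(zpowFunctor e i).preimageIso (α ≪≫ φ.app X)⟩,
    fun ⟨β⟩ => ⟨(zpowFunctor e i).mapIso β ≪≫ (φ.app X).symm⟩⟩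

variable {e} in
theorem eq_of_nonempty_obj_iso [HasZeroMorphisms C] (hF : StronglyNonperiodic e)
    {X : C} {s t : ℤ} (hX : ¬IsZero ((zpowFunctor e s).obj X))
    (h : Nonempty ((zpowFunctor e s).obj X ≅ (zpowFunctor e t).obj X)) : s = t := by
  obtain ⟨α⟩ := (nonempty_obj_iso_iff e s t X X).mp h
  rcases hF X (t - s) ⟨α.symm⟩ with hX₀ | hts
  · exact absurd ((zpowFunctor e s).map_isZero hX₀) hX
  · omega

end zpowFunctor

theorem Indecomposable.map {D : Type*} [Category D] [Preadditive C] [HasBinaryBiproducts C]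
    [Preadditive D] [HasBinaryBiproducts D] (F : C ⥤ D) [F.IsEquivalence] {X : C}
    (hX : Indecomposable X) : Indecomposable (F.obj X) := by
  refine ⟨fun h => hX.1 (IsZero.of_full_of_faithful_of_isZero F X h), fun Y Z i => ?_⟩
  have := preservesBinaryBiproducts_of_preservesBinaryProducts F.inv
  rcases hX.2 _ _ (F.asEquivalence.unitIso.app X ≪≫ F.inv.mapIso i ≪≫ F.inv.mapBiprod Y Z)
    with h | h
  exacts [Or.inl (IsZero.of_full_of_faithful_of_isZero F.inv Y h),
    Or.inr (IsZero.of_full_of_faithful_of_isZero F.inv Z h)]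

theorem Nat.card_subtype_sigma {α : Type*} {β : α → Type*} [Fintype α] [∀ a, Fintype (β a)]
    (P : (Σ a, β a) → Prop) :
    Nat.card {x : Σ a, β a // P x} = ∑ a, Nat.card {b : β a // P ⟨a, b⟩} := by
  classical
  simp only [Nat.card_eq_fintype_card, Fintype.card_subtype, Finset.card_filter,
    Fintype.sum_sigma]

theorem eq_zero_of_forall_sum_mul_sub_eq_zero {G R : Type*} [AddCommGroup G] [LinearOrder G]
    [IsOrderedAddMonoid G] [Semiring R] [NoZeroDivisors R] (S : Finset G) (b D : G → R)
    (hb : ∃ i ∈ S, b i ≠ 0) (hD : (Function.support D).Finite)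
    (h : ∀ t, ∑ i ∈ S, b i * D (t - i) = 0) : D = 0 := by
  classical
  by_contra hD₀
  have hDne : hD.toFinset.Nonempty := by
    simpa [Finset.nonempty_iff_ne_empty, Function.support_eq_empty_iff] using hD₀
  have hbne : (S.filter (b · ≠ 0)).Nonempty := by simpa [Finset.filter_nonempty_iff] using hb
  set t₀ := hD.toFinset.max' hDne
  set i₀ := (S.filter (b · ≠ 0)).max' hbne
  obtain ⟨hi₀S, hbi₀⟩ := Finset.mem_filter.mp ((S.filter (b · ≠ 0)).max'_mem hbne)
  have hDt₀ : D t₀ ≠ 0 := by simpa using hD.toFinset.max'_mem hDne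
  have hsingle : ∑ i ∈ S, b i * D (t₀ + i₀ - i) = b i₀ * D t₀ := by
    rw [Finset.sum_eq_single_of_mem i₀ hi₀S, add_sub_cancel_right]
    intro i hiS hi
    by_cases hbi : b i = 0
    · rw [hbi, zero_mul]
    have hlt : i < i₀ := lt_of_le_of_ne ((S.filter (b · ≠ 0)).le_max' i (by simp [hiS, hbi])) hi
    have hgt : t₀ < t₀ + i₀ - i := by
      rw [add_sub_assoc]; exact lt_add_of_pos_right t₀ (sub_pos.mpr hlt)
    have : D (t₀ + i₀ - i) = 0 := by
      by_contra hne
      exact not_le_of_gt hgt (hD.toFinset.le_max' _ (by simpa using hne))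
    rw [this, mul_zero]
  exact mul_ne_zero hbi₀ hDt₀ (hsingle ▸ h (t₀ + i₀))

section IsoCount

variable {ι κ : Type*}

noncomputable def isoCount (f : ι → C) (X : C) : ℕ :=
  Nat.card {i // Nonempty (f i ≅ X)}

theorem isoCount_congr {f : ι → C} {g : κ → C} (σ : ι ≃ κ) (h : ∀ i, Nonempty (f i ≅ g (σ i)))
    (X : C) : isoCount f X = isoCount g X :=
  Nat.card_congr <| σ.subtypeEquiv fun i =>
    ⟨fun ⟨α⟩ => ⟨(h i).some.symm ≪≫ α⟩, fun ⟨α⟩ => ⟨(h i).some ≪≫ α⟩⟩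

theorem exists_equiv_of_isoCount_eq [Finite ι] [Finite κ] {f : ι → C} {g : κ → C}
    (h : ∀ X, isoCount f X = isoCount g X) : ∃ σ : ι ≃ κ, ∀ i, Nonempty (f i ≅ g (σ i)) := by
  have hfiber : ∀ q : Quotient (isIsomorphicSetoid C),
      Nonempty ({i // ⟦f i⟧ = q} ≃ {j // ⟦g j⟧ = q}) := by
    refine Quotient.ind fun X => ?_
    obtain ⟨φ⟩ := Finite.card_eq.mp (h X)
    have hcls : ∀ Y : C, (⟦Y⟧ : Quotient (isIsomorphicSetoid C)) = ⟦X⟧ ↔ Nonempty (Y ≅ X) :=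
      fun _ => Quotient.eq
    exact ⟨(Equiv.subtypeEquivRight fun _ => hcls _).trans
      (φ.trans (Equiv.subtypeEquivRight fun _ => hcls _).symm)⟩
  refine ⟨Equiv.ofFiberEquiv fun q => (hfiber q).some, fun i => ?_⟩
  exact Quotient.exact (Equiv.ofFiberEquiv_map (fun q => (hfiber q).some) i).symm

theorem finite_support_isoCount_zpowFunctor [HasZeroMorphisms C] {e : C ≌ C}
    (hF : StronglyNonperiodic e) [Finite ι] {f : ι → C} (hf : ∀ i, ¬IsZero (f i)) (X : C) :
    (Function.support fun s => isoCount f ((zpowFunctor e s).obj X)).Finite := by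
  have hsub : ∀ i, {s | Nonempty (f i ≅ (zpowFunctor e s).obj X)}.Subsingleton :=
    fun i s ⟨α⟩ t ⟨β⟩ =>
      zpowFunctor.eq_of_nonempty_obj_iso hF (fun h => hf i (h.of_iso α)) ⟨α.symm ≪≫ β⟩
  refine (Set.finite_iUnion fun i => (hsub i).finite).subset fun s hs => ?_
  obtain ⟨⟨i, hi⟩⟩ := (Nat.card_ne_zero.mp hs).1
  exact Set.mem_iUnion.mpr ⟨i, hi⟩

end IsoCount

namespace Gobj

variable (e : C ≌ C) (k l : ℤ) (b : ℤ → ℕ)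

def summands {ι : Type*} (f : ι → C) :
    (Σ _ : (Σ i : (Finset.Icc k l : Finset ℤ), Fin (b (i : ℤ))), ι) → C :=
  fun q => (zpowFunctor e q.1.1).obj (f q.2)

noncomputable def isoBiproduct [Preadditive C] [HasFiniteBiproducts C] {ι : Type} [Fintype ι]
    {A : C} (f : ι → C) (iA : A ≅ ⨁ f) : Gobj e k l b A ≅ ⨁ summands e k l b f :=
  biproduct.mapIso (fun p => (zpowFunctor e p.1).mapIso iA ≪≫
    (zpowFunctor e p.1).mapBiproduct f) ≪≫ biproductBiproductIso _ _

theorem isoCount_summands {ι : Type*} [Fintype ι] (f : ι → C) (X : C) (t : ℤ) :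
    isoCount (summands e k l b f) ((zpowFunctor e t).obj X) =
      ∑ i ∈ Finset.Icc k l, b i * isoCount f ((zpowFunctor e (t - i)).obj X) := by
  rw [← Finset.sum_coe_sort]
  simp only [isoCount, summands, Nat.card_subtype_sigma, zpowFunctor.nonempty_obj_iso_iff,
    Fintype.sum_sigma, Finset.sum_const, Finset.card_univ, Fintype.card_fin, smul_eq_mul]

variable {e k l b}

theorem isoCount_eq_of_isoCount_summands_eq [HasZeroMorphisms C] (hF : StronglyNonperiodic e)
    (hb : ∃ i ∈ Finset.Icc k l, b i ≠ 0) {ι κ : Type*} [Fintype ι] [Fintype κ]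
    {f : ι → C} {g : κ → C}
    (hf : ∀ i, ¬IsZero (f i)) (hg : ∀ j, ¬IsZero (g j))
    (h : ∀ Y, isoCount (summands e k l b f) Y = isoCount (summands e k l b g) Y) (X : C) :
    isoCount f X = isoCount g X := by
  set D : ℤ → ℤ := fun s =>
    isoCount f ((zpowFunctor e s).obj X) - isoCount g ((zpowFunctor e s).obj X)
  have hD : (Function.support D).Finite := by
    refine ((finite_support_isoCount_zpowFunctor hF hf X).union
      (finite_support_isoCount_zpowFunctor hF hg X)).subset fun s hs => ?_
    by_contra hs'
    simp only [Set.mem_union, Function.mem_support, not_or, not_not] at hs'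
    exact hs (by simp [D, hs'.1, hs'.2])
  have hconv : ∀ t, ∑ i ∈ Finset.Icc k l, (b i : ℤ) * D (t - i) = 0 := by
    intro t
    have := h ((zpowFunctor e t).obj X)
    rw [isoCount_summands, isoCount_summands] at this
    simp only [D, mul_sub, Finset.sum_sub_distrib, sub_eq_zero]
    exact_mod_cast this
  have hD₀ := congrFun (eq_zero_of_forall_sum_mul_sub_eq_zero _ _ D (by simpa using hb) hD hconv) 0
  change isoCount f ((zpowFunctor e 0).obj X) = isoCount g ((zpowFunctor e 0).obj X)
  simpa [D, sub_eq_zero] using hD₀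

end Gobj

section

variable [Preadditive C] [HasFiniteBiproducts C]

attribute [local instance] hasBinaryBiproducts_of_finite_biproducts

theorem IsKrullSchmidt.isoCount_eq (hKS : IsKrullSchmidt C) {ι κ : Type*} [Fintype ι]
    [Fintype κ] {f : ι → C} {g : κ → C} (hf : ∀ i, Indecomposable (f i))
    (hg : ∀ j, Indecomposable (g j)) (h : Nonempty (⨁ f ≅ ⨁ g)) (X : C) :
    isoCount f X = isoCount g X := by
  let εf := (Fintype.equivFin ι).symm
  let εg := (Fintype.equivFin κ).symm
  obtain ⟨σ, hσ⟩ := hKS.2 _ _ (f ∘ εf) (g ∘ εg) (fun i => hf _) (fun j => hg _)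
    ⟨biproduct.whiskerEquiv εf (fun _ => Iso.refl _) ≪≫ h.some ≪≫
      (biproduct.whiskerEquiv εg (fun _ => Iso.refl _)).symm⟩
  calc isoCount f X = isoCount (f ∘ εf) X :=
        isoCount_congr εf.symm (fun _ => ⟨eqToIso (by simp)⟩) X
    _ = isoCount (g ∘ εg) X := isoCount_congr σ hσ X
    _ = isoCount g X := isoCount_congr εg (fun _ => ⟨Iso.refl _⟩) X

end

section

variable [Preadditive C] [CategoryTheory.Linear ℂ C] [HasFiniteBiproducts C]

attribute [local instance] hasBinaryBiproducts_of_finite_biproducts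

theorem krull_schmidt_nonperiodic_cancellation_general
    (hKS : IsKrullSchmidt C) (e : C ≌ C)
    (hF : ∀ (A : C) (k : ℤ), Nonempty ((zpowFunctor e k).obj A ≅ A) → IsZero A ∨ k = 0)
    (k l : ℤ) (b : ℤ → ℕ) (hb : ∃ i ∈ Finset.Icc k l, b i ≠ 0)
    (A B : C) (h : Nonempty (Gobj e k l b A ≅ Gobj e k l b B)) :
    Nonempty (A ≅ B) := by
  obtain ⟨n, f, hf, ⟨iA⟩⟩ := hKS.1 A
  obtain ⟨m, g, hg, ⟨iB⟩⟩ := hKS.1 B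
  have hsummands : ∀ Y, isoCount (Gobj.summands e k l b f) Y =
      isoCount (Gobj.summands e k l b g) Y :=
    hKS.isoCount_eq (fun q => Indecomposable.map _ (hf q.2))
      (fun q => Indecomposable.map _ (hg q.2))
      ⟨(Gobj.isoBiproduct e k l b f iA).symm ≪≫ h.some ≪≫ Gobj.isoBiproduct e k l b g iB⟩
  obtain ⟨σ, hσ⟩ := exists_equiv_of_isoCount_eq <|
    Gobj.isoCount_eq_of_isoCount_summands_eq hF hb (fun i => (hf i).1) (fun j => (hg j).1)
      hsummands
  exact ⟨iA ≪≫ biproduct.whiskerEquiv σ (fun j => (hσ j).some.symm) ≪≫ iB.symm⟩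

theorem krull_schmidt_nonperiodic_cancellation
    (hKS : IsKrullSchmidt C) (e : C ≌ C)
    (hF : ∀ (A : C) (k : ℤ), Nonempty ((zpowFunctor e k).obj A ≅ A) → IsZero A ∨ k = 0)
    (k l : ℤ) (hkl : k ≤ l) (b : ℤ → ℕ) (hb : ∃ i ∈ Finset.Icc k l, b i ≠ 0)
    (A B : C) (h : Nonempty (Gobj e k l b A ≅ Gobj e k l b B)) :
    Nonempty (A ≅ B) :=
  krull_schmidt_nonperiodic_cancellation_general hKS e hF k l b hb A B h

end
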